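/- arXiv:2410.20343 — 3 statements merged into one kernel-verified Lean document; each statement's English description precedes it below -/
import Mathlib

section
/- For a class P of posets containing the trivial poset, the Recurrence Axiom (P,A)-RcA holds if and only if the Inner Ground Hypothesis IGH(P,A) holds. -/
section
variable {Poset Formula Param World : Type*}

/-- For a class `P` of posets containing the trivial poset, the Recurrence Axiom
`(P, A)`-RcA holds if and only if the Inner Ground Hypothesis `IGH(P, A)` holds.

Grounds are modeled by an abstract relation `GroundOf W U` ("`W` is a ground of `U`")
which is reflexive (every universe is a ground of itself) and transitive (a ground of a
ground is a ground).  The formula transformer `groundSat φ` denotes the statement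
"there is a ground containing the parameters which satisfies `φ`"; its semantics is
fixed by `hsat`, and `hforce` records that any poset forcing `φ` also forces
`groundSat φ` (since every universe is a ground of itself). -/
theorem rcA_iff_IGH
    (P : Set Poset) (A : Set Param)
    (triv : Poset) (htriv : triv ∈ P)
    (V : World)
    (GroundOf : World → World → Prop)
    (hrefl : ∀ W, GroundOf W W)
    (htrans : ∀ W U E, GroundOf W U → GroundOf U E → GroundOf W E)
    (memW : Param → World → Prop)
    (satW : World → Formula → List Param → Prop)
    (forces : Poset → Formula → List Param → Prop)
    (groundSat : Formula → Formula)
    (hsat : ∀ W φ as, satW W (groundSat φ) as ↔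
      ∃ W', GroundOf W' W ∧ (∀ a ∈ as, memW a W') ∧ satW W' φ as)
    (hforce : ∀ p φ as, forces p φ as → forces p (groundSat φ) as) :
    -- (P, A)-RcA
    (∀ (φ : Formula) (as : List Param), (∀ a ∈ as, a ∈ A) →
        (∃ p ∈ P, forces p φ as) →
        ∃ W, GroundOf W V ∧ (∀ a ∈ as, memW a W) ∧ satW W φ as)
    ↔
    -- IGH(P, A): if some ℙ ∈ P forces "there is a ground M with ā ∈ M satisfying φ(ā)",
    -- then there is a ground W of V with ā ∈ W and W ⊨ φ(ā).
    (∀ (φ : Formula) (as : List Param), (∀ a ∈ as, a ∈ A) →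
        (∃ p ∈ P, forces p (groundSat φ) as) →
        ∃ W, GroundOf W V ∧ (∀ a ∈ as, memW a W) ∧ satW W φ as) := by
  constructor
  · rintro h φ as hA ⟨p, hp, hf⟩
    obtain ⟨W, hWV, hmem, hsatW⟩ := h (groundSat φ) as hA ⟨p, hp, hf⟩
    obtain ⟨W', hW', hmem', hsat'⟩ := (hsat W φ as).mp hsatW
    exact ⟨W', htrans W' W V hW' hWV, hmem', hsat'⟩
  · rintro h φ as hA ⟨p, hp, hf⟩
    exact h φ as hA ⟨p, hp, hforce p φ as hf⟩

end
end

section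
/- If κ is P-Laver-generically supercompact for an iterable class P of posets which contains a poset collapsing ℵ₁ (forcing ℵ₁^V to be countable), then κ = ℵ₁. -/
open Ordinal

/-- An iterable class of posets (abstract data). -/
structure IterableClass (Poset PName : Type*) (P : Set Poset) where
  triv : Poset
  trivMem : triv ∈ P
  goodName : Poset → PName → Prop
  iter : Poset → PName → Poset
  iterMem : ∀ p ∈ P, ∀ q, goodName p q → iter p q ∈ P

/-- If `κ` is `P`-Laver-generically supercompact for an iterable class `P` of posets which
contains a poset collapsing `ℵ₁` (forcing `ℵ₁^V` to be countable), then `κ = ℵ₁`.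

Abstract axiomatization: `Ω V` is `ω₁^V`, `countableIn W α` means the ordinal `α` is
countable in the world `W`, and `Ext p` is a generic extension of `V` by `p`.
The embedding data provided by Laver-generic supercompactness records: the critical
point behavior of `j` on ordinals, that `M` sees everything counted in the extension by
`p` (since `ℙ, H ∩ ℙ ∈ M`), and elementarity (if `M ⊨ "j(α) is countable"` then
`V ⊨ "α is countable"`).  The critical point `κ` is an uncountable cardinal, whence
`κ ≠ ℵ₁ → ℵ₁ < κ`. -/
theorem laverGenSC_collapse_eq_aleph1
    {World Poset PName : Type*} (V : World)
    (P : Set Poset) (I : IterableClass Poset PName P)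
    (Ext : Poset → World)
    (Ω : World → Ordinal)
    (countableIn : World → Ordinal → Prop)
    (κ : Ordinal)
    (hnotctbl : ¬ countableIn V (Ω V))
    (hcrit_card : κ ≠ Ω V → Ω V < κ)
    -- `P` contains a poset collapsing `ℵ₁^V`:
    (hcollapse : ∃ p ∈ P, countableIn (Ext p) (Ω V))
    -- `κ` is `P`-Laver-generically supercompact (relevant abstract consequences):
    (hLG : ∀ lam : Ordinal, κ < lam → ∀ p ∈ P, ∃ q, I.goodName p q ∧
        ∃ (M : World) (j : Ordinal → Ordinal),
          StrictMono j ∧ (∀ α < κ, j α = α) ∧ κ < j κ ∧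
          (∀ α, countableIn (Ext p) α → countableIn M α) ∧
          (∀ α, countableIn M (j α) → countableIn V α)) :
    κ = Ω V := by
  by_contra hne
  have hlt : Ω V < κ := hcrit_card hne
  obtain ⟨p, hp, hpc⟩ := hcollapse
  obtain ⟨q, hq, M, j, hmono, hfix, hjk, hM1, hM2⟩ :=
    hLG (κ + 1) (Order.lt_succ κ) p hp
  exact hnotctbl (hM2 (Ω V) (by rw [hfix (Ω V) hlt]; exact hM1 (Ω V) hpc))
end

section
/- Suppose (P,∅)-RcA holds, where P is a class of posets such that either P contains posets collapsing arbitrarily large cardinals to a small cardinality, or P contains posets adding arbitrarily many reals. If there is a ψ*_n-absolute inaccessible cardinal for some n, then there are cofinally many ψ*_n-absolute inaccessible cardinals. -/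
open Ordinal

/-- Suppose `(P, ∅)`-RcA holds for a class `P` of posets containing posets collapsing
arbitrarily large cardinals to a small cardinality, or posets adding arbitrarily many
reals.  If there is a `ψ*_n`-absolute inaccessible cardinal, then there are cofinally
many `ψ*_n`-absolute inaccessible cardinals.

Abstract axiomatization: `A W` is the class of `ψ*_n`-absolute inaccessible cardinals as
computed in the world `W`; `none` is the sentence "there is no `ψ*_n`-absolute
inaccessible cardinal" (`hsat`).  Non-resurrectability of `ψ*_n`-absolute inaccessibility
means that it passes down to grounds: `A V ⊆ A W` for every ground `W` (`hnonres`).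
The assumption on `P` (collapsing or real-adding posets above any bound), together with
the destructibility of `ψ*_n`-absolute inaccessibility, yields a poset in `P` forcing
`none` whenever all `ψ*_n`-absolute inaccessibles lie below some bound (`hdestroy`). -/
theorem cofinally_many_psiAbs_inaccessibles
    {World Poset Formula : Type*} (V : World)
    (P : Set Poset)
    (forces : Poset → Formula → Prop)
    (Ground : World → Prop)
    (satW : World → Formula → Prop)
    (A : World → Set Ordinal)
    (none : Formula)
    (hsat : ∀ W, satW W none ↔ A W = ∅)
    (hnonres : ∀ W, Ground W → A V ⊆ A W)
    (hdestroy : ∀ β : Ordinal, (∀ μ ∈ A V, μ ≤ β) → ∃ p ∈ P, forces p none)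
    -- (P, ∅)-RcA:
    (hRcA : ∀ φ : Formula, (∃ p ∈ P, forces p φ) → ∃ W, Ground W ∧ satW W φ)
    -- there is a ψ*_n-absolute inaccessible cardinal:
    (hex : ∃ lam, lam ∈ A V) :
    ∀ β : Ordinal, ∃ μ ∈ A V, β < μ := by
  intro β
  by_contra h
  push_neg at h
  obtain ⟨p, hp, hf⟩ := hdestroy β (fun μ hμ => (h μ hμ))
  obtain ⟨W, hW, hs⟩ := hRcA none ⟨p, hp, hf⟩
  obtain ⟨lam, hlam⟩ := hex
  have := hnonres W hW hlam
  rw [(hsat W).1 hs] at this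
  exact this
end
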